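/- arXiv:1807.05503 — 4 statements merged into one kernel-verified Lean document; each statement's English description precedes it below -/
import Mathlib

section
/- 1/z-expansion of the small I-function of local P^2: Let F = ℚ(λ_0,λ_1,λ_2,H) and let w be a formal variable (playing the role of 1/z). For d ≥ 1 define c_d ∈ F[[w]] as the product c_d = [Π_{k=0}^{3d−1}(−3H − kw^{−1})·w^{3d}] · Π_{i=0}^{2} Π_{k=1}^{d}(k + (H−λ_i)w)^{−1}, i.e. the expansion at z = ∞ (w = 1/z) of the q^d-coefficient of the small I-function of local P^2. Then c_d has zero constant term in w, its coefficient of w^1 equals 3(−1)^d (3d−1)!/(d!)^3 · H, and its coefficient of w^2 equals (−1)^d · 3 (3d−1)!/(d!)^3 · [ (3·Har[3d−1] − 3·Har[d])·H^2 + Har[d]·s_1·H ], where Har[m] = Σ_{k=1}^{m} 1/k and s_1 = λ_0+λ_1+λ_2. Equivalently, the small I-function has the expansion 1 + I_1 H/z + (I_{2,0}H^2 + I_{2,1}s_1H)/z^2 + O(1/z^3) with I_1(q) = Σ_{d≥1} 3 (3d−1)!/(d!)^3 (−q)^d, I_{2,0}(q) = Σ_{d≥1} 3 (3d−1)!/(d!)^3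 (3Har[3d−1] − 3Har[d]) (−q)^d, and I_{2,1}(q) = Σ_{d≥1} 3 (3d−1)!/(d!)^3 Har[d] (−q)^d. -/
/-!
Clearing the denominators gives `c_d · D = N` with `D = Π_{i,k} (k + 1 + (H - λ_i) w)`, whose
constant term `(d!)³` is invertible, and `N = Π_{k<3d} (-3Hw - k)`, which is divisible by `w`
(the factor `k = 0`). Both are products of linear factors, and the `w`-coefficient of
`Π_j (a_j + b_j w)` is `Π_j a_j · Σ_j b_j / a_j`: this is where the harmonic numbers come from.
Comparing the coefficients of `w⁰, w¹, w²` in `c_d · D = N` then determines those of `c_d`.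
-/

noncomputable section

/-- The rational function field `F = ℚ(λ_0,λ_1,λ_2,H)`. -/
abbrev F5 : Type := FractionRing (MvPolynomial (Fin 3 ⊕ Unit) ℚ)

/-- The indeterminate `λ_i`. -/
def lam (i : Fin 3) : F5 :=
  algebraMap (MvPolynomial (Fin 3 ⊕ Unit) ℚ) F5 (MvPolynomial.X (Sum.inl i))

/-- The indeterminate `H`. -/
def Hc : F5 :=
  algebraMap (MvPolynomial (Fin 3 ⊕ Unit) ℚ) F5 (MvPolynomial.X (Sum.inr ()))

/-- Harmonic number `Har[m] = Σ_{k=1}^m 1/k` in `F`. -/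
def Har (m : ℕ) : F5 := ∑ k ∈ Finset.range m, ((k : F5) + 1)⁻¹

/-- `c_d = Π_{k=0}^{3d−1}(−3Hw − k) · Π_{i=0}^{2} Π_{k=1}^{d}(k + (H−λ_i)w)⁻¹ ∈ F[[w]]`,
the expansion at `z = ∞` (`w = 1/z`) of the `q^d`-coefficient of the small
I-function of local P². -/
def cSeries (d : ℕ) : PowerSeries F5 :=
  (∏ k ∈ Finset.range (3 * d),
      (PowerSeries.C (-3 * Hc) * PowerSeries.X - (k : PowerSeries F5))) *
  (∏ i : Fin 3, ∏ k ∈ Finset.range d,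
      (((k : PowerSeries F5) + 1) + PowerSeries.C (Hc - lam i) * PowerSeries.X)⁻¹)

open PowerSeries Finset

namespace PowerSeries

lemma coeff_two_mul {R : Type*} [CommSemiring R] (φ ψ : R⟦X⟧) :
    coeff 2 (φ * ψ) =
      constantCoeff φ * coeff 2 ψ + coeff 1 φ * coeff 1 ψ + coeff 2 φ * constantCoeff ψ := by
  rw [coeff_mul, Nat.sum_antidiagonal_eq_sum_range_succ_mk]
  simp [sum_range_succ, coeff_zero_eq_constantCoeff]

variable {K : Type*} [Field K]

lemma coeff_le_two_of_mul_eq {c p n : K⟦X⟧} (h : c * p = n) (hp : constantCoeff p ≠ 0)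
    (hn : constantCoeff n = 0) :
    constantCoeff c = 0 ∧ coeff 1 c = coeff 1 n / constantCoeff p ∧
      coeff 2 c = (coeff 2 n - coeff 1 c * coeff 1 p) / constantCoeff p := by
  have h0 : constantCoeff c = 0 := by
    have := congrArg constantCoeff h
    rw [map_mul, hn] at this
    exact (mul_eq_zero.mp this).resolve_right hp
  refine ⟨h0, ?_, ?_⟩
  · rw [eq_div_iff hp, ← h, coeff_one_mul, h0]; ring
  · rw [eq_div_iff hp, ← h, coeff_two_mul, h0]; ring

lemma prod_inv_mul_prod {ι : Type*} (s : Finset ι) (f : ι → K⟦X⟧)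
    (hf : ∀ i ∈ s, constantCoeff (f i) ≠ 0) :
    (∏ i ∈ s, (f i)⁻¹) * ∏ i ∈ s, f i = 1 := by
  rw [← prod_mul_distrib]
  exact prod_eq_one fun i hi => PowerSeries.inv_mul_cancel _ (hf i hi)

lemma constantCoeff_prod_linear {R ι : Type*} [CommSemiring R] (s : Finset ι) (a b : ι → R) :
    constantCoeff (∏ j ∈ s, (C (a j) + C (b j) * X)) = ∏ j ∈ s, a j := by
  simp

lemma coeff_one_prod_linear {ι : Type*} (s : Finset ι) (a b : ι → K) (ha : ∀ j ∈ s, a j ≠ 0) :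
    coeff 1 (∏ j ∈ s, (C (a j) + C (b j) * X)) = (∏ j ∈ s, a j) * ∑ j ∈ s, b j / a j := by
  induction s using Finset.cons_induction with
  | empty => simp
  | cons j s hj ih =>
    have haj : a j ≠ 0 := ha j (mem_cons_self j s)
    rw [prod_cons, coeff_one_mul, ih fun i hi => ha i (mem_cons_of_mem hi),
      constantCoeff_prod_linear, prod_cons, sum_cons]
    simp only [map_add, coeff_succ_C, coeff_succ_mul_X, coeff_zero_C, zero_add, constantCoeff_C,
      map_mul, constantCoeff_X, mul_zero, add_zero]
    field_simp

end PowerSeries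

lemma sum_div_natCast_add_one_eq_mul_Har (b : F5) (m : ℕ) :
    ∑ k ∈ range m, b / ((k : F5) + 1) = b * Har m := by
  simp [Har, mul_sum, div_eq_mul_inv]

lemma prod_range_natCast_add_one {K : Type*} [CommSemiring K] (n : ℕ) :
    ∏ k ∈ range n, ((k : K) + 1) = n.factorial := by
  rw [← prod_range_add_one_eq_factorial, Nat.cast_prod]
  push_cast
  rfl

lemma neg_one_pow_three_mul_sub_one {R : Type*} [Ring R] {d : ℕ} (hd : 1 ≤ d) :
    (-1 : R) ^ (3 * d - 1) = -(-1) ^ d := by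
  obtain ⟨e, rfl⟩ := Nat.exists_eq_add_of_le' hd
  rw [show 3 * (e + 1) - 1 = 2 * (e + 1) + e by omega, pow_add, pow_mul]
  simp [pow_succ]

def cSeriesNum (d : ℕ) : F5⟦X⟧ := ∏ k ∈ range (3 * d), (C (-3 * Hc) * X - (k : F5⟦X⟧))

def cSeriesDen (d : ℕ) : F5⟦X⟧ := ∏ i : Fin 3, ∏ k ∈ range d, ((k : F5⟦X⟧) + 1 + C (Hc - lam i) * X)

lemma cSeries_mul_cSeriesDen (d : ℕ) : cSeries d * cSeriesDen d = cSeriesNum d := by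
  rw [cSeries, cSeriesDen, cSeriesNum, mul_assoc, ← prod_mul_distrib]
  convert mul_one _
  refine prod_eq_one fun i _ => prod_inv_mul_prod _ _ fun k _ => ?_
  simpa using Nat.cast_add_one_ne_zero k

lemma cSeriesDen_eq_prod_linear (d : ℕ) :
    cSeriesDen d = ∏ p ∈ univ ×ˢ range d, (C ((p.2 : F5) + 1) + C (Hc - lam p.1) * X) := by
  rw [cSeriesDen, prod_product]
  simp

lemma constantCoeff_cSeriesDen (d : ℕ) : constantCoeff (cSeriesDen d) = (d.factorial : F5) ^ 3 := by
  rw [cSeriesDen_eq_prod_linear, constantCoeff_prod_linear, prod_product]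
  simp [prod_range_natCast_add_one]

lemma coeff_one_cSeriesDen (d : ℕ) :
    coeff 1 (cSeriesDen d) = (d.factorial : F5) ^ 3 * ((3 * Hc - (lam 0 + lam 1 + lam 2)) * Har d) := by
  rw [cSeriesDen_eq_prod_linear, coeff_one_prod_linear _ _ _ fun p _ => Nat.cast_add_one_ne_zero _,
    ← constantCoeff_prod_linear _ _ (fun p => Hc - lam p.1), ← cSeriesDen_eq_prod_linear,
    constantCoeff_cSeriesDen, sum_product]
  simp only [sum_div_natCast_add_one_eq_mul_Har, Fin.sum_univ_three]
  ring

lemma cSeriesNum_eq_mul_X {d : ℕ} (hd : 1 ≤ d) :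
    cSeriesNum d = (∏ k ∈ range (3 * d - 1), (C (-((k : F5) + 1)) + C (-3 * Hc) * X)) *
      (C (-3 * Hc) * X) := by
  rw [cSeriesNum, show 3 * d = 3 * d - 1 + 1 by omega, prod_range_succ', Nat.add_sub_cancel]
  congr 1
  · refine prod_congr rfl fun k _ => ?_
    simp only [neg_mul, map_neg, map_mul, Nat.cast_add, Nat.cast_one, neg_add_rev, map_add, map_one,
      map_natCast]
    ring
  · simp

lemma coeff_cSeriesNum {d : ℕ} (hd : 1 ≤ d) :
    constantCoeff (cSeriesNum d) = 0 ∧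
    coeff 1 (cSeriesNum d) = 3 * (-1) ^ d * ((3 * d - 1).factorial : F5) * Hc ∧
    coeff 2 (cSeriesNum d) = coeff 1 (cSeriesNum d) * (3 * Hc * Har (3 * d - 1)) := by
  have hcoeff (n : ℕ) (φ : F5⟦X⟧) (b : F5) : coeff (n + 1) (φ * (C b * X)) = coeff n φ * b := by
    rw [← mul_assoc, coeff_succ_mul_X, coeff_mul_C]
  rw [cSeriesNum_eq_mul_X hd]
  refine ⟨by simp, ?_, ?_⟩
  · rw [hcoeff 0, coeff_zero_eq_constantCoeff, constantCoeff_prod_linear, prod_neg,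
      prod_range_natCast_add_one, card_range, neg_one_pow_three_mul_sub_one hd]
    ring
  · rw [hcoeff 1, hcoeff 0, coeff_zero_eq_constantCoeff, coeff_one_prod_linear _ _ _
      fun k _ => neg_ne_zero.mpr (Nat.cast_add_one_ne_zero k)]
    simp only [constantCoeff_prod_linear, neg_mul, neg_div_neg_eq, sum_div_natCast_add_one_eq_mul_Har]
    ring

theorem stmt5 (d : ℕ) (hd : 1 ≤ d) :
    PowerSeries.constantCoeff (cSeries d) = 0 ∧
    PowerSeries.coeff 1 (cSeries d) =
      3 * (-1 : F5) ^ d * ((3 * d - 1).factorial : F5) / ((d.factorial : F5)) ^ 3 * Hc ∧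
    PowerSeries.coeff 2 (cSeries d) =
      (-1 : F5) ^ d * 3 * ((3 * d - 1).factorial : F5) / ((d.factorial : F5)) ^ 3 *
        ((3 * Har (3 * d - 1) - 3 * Har d) * Hc ^ 2
          + Har d * (lam 0 + lam 1 + lam 2) * Hc) := by
  obtain ⟨hN0, hN1, hN2⟩ := coeff_cSeriesNum hd
  have hD0 : constantCoeff (cSeriesDen d) ≠ 0 := by
    rw [constantCoeff_cSeriesDen]
    exact pow_ne_zero _ (Nat.cast_ne_zero.mpr d.factorial_ne_zero)
  obtain ⟨h0, h1, h2⟩ := coeff_le_two_of_mul_eq (cSeries_mul_cSeriesDen d) hD0 hN0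
  have hc1 : coeff 1 (cSeries d) =
      3 * (-1 : F5) ^ d * ((3 * d - 1).factorial : F5) / ((d.factorial : F5)) ^ 3 * Hc := by
    rw [h1, hN1, constantCoeff_cSeriesDen]
    ring
  refine ⟨h0, hc1, ?_⟩
  rw [h2, hc1, hN2, hN1, coeff_one_cSeriesDen, constantCoeff_cSeriesDen]
  have hfac : (d.factorial : F5) ≠ 0 := Nat.cast_ne_zero.mpr d.factorial_ne_zero
  field_simp
  ring

end
end

section
/- The X-relation for local P^2 (eq. (5.1) of the paper, used to show that the differential ring 𝔾_2[X, 𝖣X, 𝖣𝖣X, …] equals 𝔾_2[X]): In ℚ[[q]] define I_1 = 3·Σ_{d≥1} (−1)^d (3d−1)!/(d!)^3 q^d, C_1 = 1 + 𝖣I_1 (invertible since its constant term is 1), and X = (𝖣C_1)/C_1, where 𝖣 = q·d/dq. Then X^2 − ((1+27q)^{−1} − 1)·X + 𝖣X − (2/9)·((1+27q)^{−1} − 1) = 0 in ℚ[[q]]. Equivalently, with L ∈ ℚ[[q]] the unique power series with constant term 1 satisfying L^3·(1+27q) = 1, one has X^2 − (L^3−1)X + 𝖣X − (2/9)(L^3−1)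 = 0. -/
/-!
`C₁` is the hypergeometric series `Σ (-1)^d (3d)!/(d!)^3 q^d`, whose coefficients satisfy
`(d+1)² a_{d+1} = -3(3d+1)(3d+2) a_d`; equivalently `C₁` is annihilated by the Picard–Fuchs operator
`(1 + 27q) 𝖣² + 27q 𝖣 + 6q`. Its logarithmic derivative `X = 𝖣C₁ / C₁` satisfies the Riccati identity
`X² + 𝖣X = 𝖣²C₁ / C₁`, so dividing the Picard–Fuchs equation by `(1 + 27q) C₁` gives the relation,
using `(1 + 27q)⁻¹ - 1 = -27q (1 + 27q)⁻¹`.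
-/

noncomputable section

/-- The derivation `𝖣 = q·d/dq` on `ℚ[[q]]`. -/
def Dq (G : PowerSeries ℚ) : PowerSeries ℚ :=
  PowerSeries.mk fun d => (d : ℚ) * PowerSeries.coeff d G

/-- `I₁ = 3·Σ_{d≥1} (−1)^d (3d−1)!/(d!)^3 q^d`. -/
def I₁ : PowerSeries ℚ :=
  PowerSeries.mk fun d => if d = 0 then 0 else
    3 * (-1 : ℚ) ^ d * ((3 * d - 1).factorial : ℚ) / ((d.factorial : ℚ)) ^ 3

/-- `C₁ = 1 + 𝖣I₁`. -/
def C₁ : PowerSeries ℚ := 1 + Dq I₁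

/-- `X = (𝖣C₁)/C₁`. -/
def Xser : PowerSeries ℚ := Dq C₁ * C₁⁻¹

open PowerSeries

@[simp]
lemma coeff_Dq (d : ℕ) (f : ℚ⟦X⟧) : coeff d (Dq f) = d * coeff d f :=
  coeff_mk _ _

lemma Dq_eq_X_mul_derivative (f : ℚ⟦X⟧) : Dq f = X * d⁄dX ℚ f := by
  ext (_ | n)
  · simp
  · rw [coeff_succ_X_mul, coeff_derivative, coeff_Dq]
    push_cast
    ring

@[simp]
lemma constantCoeff_Dq (f : ℚ⟦X⟧) : constantCoeff (Dq f) = 0 := by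
  rw [← coeff_zero_eq_constantCoeff_apply, coeff_Dq, Nat.cast_zero, zero_mul]

lemma Dq_one : Dq 1 = 0 := by
  ext d
  simp [coeff_one]

lemma Dq_mul (f g : ℚ⟦X⟧) : Dq (f * g) = Dq f * g + f * Dq g := by
  simp only [Dq_eq_X_mul_derivative, Derivation.leibniz, smul_eq_mul]
  ring

lemma Dq_inv {f : ℚ⟦X⟧} (hf : constantCoeff f ≠ 0) : Dq f⁻¹ = -(Dq f * f⁻¹ ^ 2) := by
  have h := congrArg Dq (PowerSeries.mul_inv_cancel f hf)
  rw [Dq_mul, Dq_one] at h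
  linear_combination f⁻¹ * h - Dq f⁻¹ * PowerSeries.mul_inv_cancel f hf

lemma sq_add_Dq_logDeriv {f : ℚ⟦X⟧} (hf : constantCoeff f ≠ 0) :
    (Dq f * f⁻¹) ^ 2 + Dq (Dq f * f⁻¹) = Dq (Dq f) * f⁻¹ := by
  rw [Dq_mul, Dq_inv hf]
  ring

lemma coeff_C₁ (d : ℕ) :
    coeff d C₁ = (-1 : ℚ) ^ d * ((3 * d).factorial : ℚ) / (d.factorial : ℚ) ^ 3 := by
  rcases d with _ | n
  · simp [C₁]
  · have hfac : ((3 * (n + 1)).factorial : ℚ) = (3 * (n + 1)) * ((3 * (n + 1) - 1).factorial : ℚ) := by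
      rw [← Nat.mul_factorial_pred (show 3 * (n + 1) ≠ 0 by omega)]
      push_cast
      ring
    simp only [C₁, map_add, coeff_one, coeff_Dq, I₁, coeff_mk, if_neg (Nat.succ_ne_zero n), hfac,
      zero_add]
    push_cast
    ring

lemma coeff_C₁_succ (n : ℕ) :
    ((n : ℚ) + 1) ^ 2 * coeff (n + 1) C₁ = -(3 * (3 * n + 1) * (3 * n + 2)) * coeff n C₁ := by
  have hfac3 : ((3 * (n + 1)).factorial : ℚ)
      = (3 * n + 3) * (3 * n + 2) * (3 * n + 1) * ((3 * n).factorial : ℚ) := by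
    rw [show 3 * (n + 1) = 3 * n + 1 + 1 + 1 by ring, Nat.factorial_succ, Nat.factorial_succ,
      Nat.factorial_succ]
    push_cast
    ring
  have hfac : ((n + 1).factorial : ℚ) = (n + 1) * (n.factorial : ℚ) := by
    push_cast [Nat.factorial_succ]
    ring
  have hn : (n.factorial : ℚ) ≠ 0 := by positivity
  rw [coeff_C₁, coeff_C₁, hfac3, hfac]
  field_simp
  ring

lemma picardFuchs_C₁ :
    (1 + 27 * X) * Dq (Dq C₁) + 27 * X * Dq C₁ + 6 * X * C₁ = 0 := by
  ext (_ | n)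
  · simp
  · have h := coeff_C₁_succ n
    simp only [add_mul, one_mul, mul_assoc, map_add, coeff_succ_X_mul, coeff_Dq,
      ← map_ofNat C, coeff_C_mul, map_zero]
    push_cast
    linear_combination h

lemma constantCoeff_C₁_ne_zero : constantCoeff C₁ ≠ 0 := by
  simp [← coeff_zero_eq_constantCoeff_apply, coeff_C₁]

lemma Dq_Dq_C₁_mul_inv_mul : Dq (Dq C₁) * C₁⁻¹ * (1 + 27 * X) = -(27 * X * Xser + 6 * X) := by
  have hC₁ := PowerSeries.mul_inv_cancel C₁ constantCoeff_C₁_ne_zero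
  have hX : Xser = Dq C₁ * C₁⁻¹ := rfl
  linear_combination C₁⁻¹ * picardFuchs_C₁ - 6 * X * hC₁ + 27 * X * hX

theorem stmt7 :
    Xser ^ 2 - ((1 + 27 * PowerSeries.X)⁻¹ - 1) * Xser + Dq Xser
      - PowerSeries.C (2 / 9 : ℚ) * ((1 + 27 * PowerSeries.X)⁻¹ - 1) = 0 := by
  have hunit : (1 + 27 * X : ℚ⟦X⟧) * (1 + 27 * X)⁻¹ = 1 :=
    PowerSeries.mul_inv_cancel _ (by simp)
  have h27 : C (2 / 9 : ℚ) * 27 = (6 : ℚ⟦X⟧) := by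
    rw [← map_ofNat C, ← map_mul, ← map_ofNat C]
    norm_num
  have riccati : Xser ^ 2 + Dq Xser = Dq (Dq C₁) * C₁⁻¹ :=
    sq_add_Dq_logDeriv constantCoeff_C₁_ne_zero
  linear_combination riccati + (1 + 27 * X)⁻¹ * Dq_Dq_C₁_mul_inv_mul
    - (Dq (Dq C₁) * C₁⁻¹ + Xser + C (2 / 9 : ℚ)) * hunit + X * (1 + 27 * X)⁻¹ * h27

end
end

section
/- String equation for the unstable (0,2)-correlator: Let t_0,t_1,… be formal variables and define μ ∈ ℚ[[t_0,t_1,…]] by μ = Σ_{k≥1} (1/k!) Σ_{b_1,…,b_k ≥ 0, b_1+⋯+b_k = k−1} [(k−1)!/(b_1!⋯b_k!)] t_{b_1}⋯t_{b_k}. Then 𝕃μ = 1 and μ|_{t_0=0} = 0, where 𝕃 = ∂/∂t_0 − Σ_{i≥1} t_i ∂/∂t_{i−1}. -/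
/-!
STATEMENT 14: String equation for the unstable (0,2)-correlator:
μ = ⟨⟨1,1⟩⟩_{0,2} = Σ_{k≥1} (1/k!) Σ_{b_1+⋯+b_k=k−1} [(k−1)!/(b_1!⋯b_k!)] t_{b_1}⋯t_{b_k}
satisfies 𝕃μ = 1 and μ|_{t_0=0} = 0, where 𝕃 = ∂/∂t_0 − Σ_{i≥1} t_i ∂/∂t_{i−1}.
-/

noncomputable section

/-- The degree-`k` part of the correlator
`⟨⟨ψ^{a_1},…,ψ^{a_n}⟩⟩_{0,n} = Σ_{k≥0} (1/k!) Σ_{Σa+Σb=n+k−3}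
[(n+k−3)!/(∏a_i!∏b_j!)] t_{b_1}⋯t_{b_k}` (a homogeneous polynomial of degree
`k` in the variables `t_0,t_1,…`). -/
def corrPoly (n : ℕ) (a : Fin n → ℕ) (k : ℕ) : MvPolynomial ℕ ℚ :=
  if 3 ≤ n + k ∧ (∑ i, a i) ≤ n + k - 3 then
    ((k.factorial : ℚ)⁻¹) •
      ∑ b ∈ Finset.Nat.antidiagonalTuple k (n + k - 3 - ∑ i, a i),
        MvPolynomial.C (((n + k - 3).factorial : ℚ) /
          ((∏ i, ((a i).factorial : ℚ)) * ∏ j, ((b j).factorial : ℚ))) *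
          ∏ j, MvPolynomial.X (b j)
  else 0

/-- The correlator `⟨⟨ψ^{a_1},…,ψ^{a_n}⟩⟩_{0,n} = Σ_k corrPoly n a k` as a formal
power series in `t_0,t_1,…`: since `corrPoly n a k` is homogeneous of degree
`k`, the coefficient of a monomial `m` comes from the term `k = |m|`. -/
def corr (n : ℕ) (a : Fin n → ℕ) : MvPowerSeries ℕ ℚ :=
  fun m => MvPolynomial.coeff m (corrPoly n a (m.sum fun _ e => e))

/-- Formal partial derivative `∂/∂t_j` on `ℚ[[t_0,t_1,…]]`. -/
def pd (j : ℕ) (F : MvPowerSeries ℕ ℚ) : MvPowerSeries ℕ ℚ :=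
  fun m => ((m j + 1 : ℕ) : ℚ) * F (m + Finsupp.single j 1)

/-- The string operator `𝕃 = ∂/∂t_0 − Σ_{i≥1} t_i ∂/∂t_{i−1}`. -/
def Lop (F : MvPowerSeries ℕ ℚ) : MvPowerSeries ℕ ℚ :=
  fun m => pd 0 F m -
    ∑ i ∈ m.support.filter (fun i => 1 ≤ i),
      MvPowerSeries.coeff m (MvPowerSeries.X i * pd (i - 1) F)

namespace Stmt14aux

/-- monomial exponent finsupp of a tuple -/
def mono {k : ℕ} (b : Fin k → ℕ) : ℕ →₀ ℕ := ∑ j, Finsupp.single (b j) 1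
def S (m : ℕ →₀ ℕ) : ℕ := m.sum fun _ e => e
def W (m : ℕ →₀ ℕ) : ℕ := m.sum fun i e => i * e
def D (m : ℕ →₀ ℕ) : ℚ := m.prod fun i e => (e.factorial : ℚ) * (i.factorial : ℚ) ^ e
def Dfac (m : ℕ →₀ ℕ) : ℚ := m.prod fun _ e => (e.factorial : ℚ)
def Dpow (m : ℕ →₀ ℕ) : ℚ := m.prod fun i e => (i.factorial : ℚ) ^ e
def Tset (k : ℕ) (m : ℕ →₀ ℕ) : Finset (Fin k → ℕ) :=
  (Fintype.piFinset fun _ : Fin k => m.support).filter fun b => mono b = m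

lemma S_add (m m' : ℕ →₀ ℕ) : S (m + m') = S m + S m' :=
  Finsupp.sum_add_index' (fun _ => rfl) (fun _ _ _ => rfl)

lemma W_add (m m' : ℕ →₀ ℕ) : W (m + m') = W m + W m' :=
  Finsupp.sum_add_index' (fun i => Nat.mul_zero i) (fun i e e' => Nat.mul_add i e e')

lemma S_single (i e : ℕ) : S (Finsupp.single i e) = e :=
  Finsupp.sum_single_index rfl

lemma W_single (i e : ℕ) : W (Finsupp.single i e) = i * e :=
  Finsupp.sum_single_index (Nat.mul_zero i)

lemma S_eq_zero {m : ℕ →₀ ℕ} (h : S m = 0) : m = 0 := by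
  ext i
  by_contra hi
  have hmem : i ∈ m.support := Finsupp.mem_support_iff.mpr hi
  have := Finset.sum_eq_zero_iff.mp h i hmem
  exact hi this

lemma mono_cons {k : ℕ} (i : ℕ) (b : Fin k → ℕ) :
    mono (Fin.cons i b) = Finsupp.single i 1 + mono b := by
  simp [mono, Fin.sum_univ_succ]

lemma S_mono {k : ℕ} (b : Fin k → ℕ) : S (mono b) = k := by
  induction k with
  | zero => simp [mono, S]
  | succ k ih =>
    have : mono b = Finsupp.single (b 0) 1 + mono (Fin.tail b) := by
      rw [← mono_cons]; congr 1; exact (Fin.cons_self_tail b).symm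
    rw [this, S_add, S_single, ih]
    omega

lemma W_mono {k : ℕ} (b : Fin k → ℕ) : W (mono b) = ∑ j, b j := by
  induction k with
  | zero => simp [mono, W]
  | succ k ih =>
    have : mono b = Finsupp.single (b 0) 1 + mono (Fin.tail b) := by
      rw [← mono_cons]; congr 1; exact (Fin.cons_self_tail b).symm
    rw [this, W_add, W_single, ih, Fin.sum_univ_succ]
    simp [Fin.tail]

lemma mem_support_of_mono {k : ℕ} {b : Fin k → ℕ} {m : ℕ →₀ ℕ} (h : mono b = m)
    (j : Fin k) : b j ∈ m.support := by
  rw [← h]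
  rw [Finsupp.mem_support_iff]
  have : (mono b) (b j) = ∑ j', (Finsupp.single (b j') 1 : ℕ →₀ ℕ) (b j) := by
    simp [mono, Finsupp.finset_sum_apply]
  rw [this]
  have h2 : 1 ≤ ∑ j', (Finsupp.single (b j') 1 : ℕ →₀ ℕ) (b j) := by
    refine le_trans (le_of_eq ?_) (Finset.single_le_sum
      (f := fun j' => (Finsupp.single (b j') 1 : ℕ →₀ ℕ) (b j))
      (fun _ _ => Nat.zero_le _) (Finset.mem_univ j))
    simp
  omega

lemma prod_eq {k : ℕ} (b : Fin k → ℕ) (g : ℕ → ℚ) :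
    ∏ j, g (b j) = (mono b).prod fun i e => g i ^ e := by
  induction k with
  | zero => simp [mono]
  | succ k ih =>
    have hb : mono b = Finsupp.single (b 0) 1 + mono (Fin.tail b) := by
      rw [← mono_cons]; congr 1; exact (Fin.cons_self_tail b).symm
    have hs : (Finsupp.single (b 0) 1).prod (fun i e => g i ^ e) = g (b 0) := by
      simp
    rw [hb, Finsupp.prod_add_index' (fun i => pow_zero (g i)) (fun i e e' => pow_add (g i) e e'),
      hs, Fin.prod_univ_succ, ← ih]
    rfl


lemma D_eq (m : ℕ →₀ ℕ) : D m = Dfac m * Dpow m := by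
  rw [D, Dfac, Dpow, ← Finsupp.prod_mul]

lemma prod_pos (m : ℕ →₀ ℕ) (f : ℕ → ℕ → ℚ) (hf : ∀ i e, 0 < f i e) :
    0 < m.prod f :=
  Finset.prod_pos fun i _ => hf i (m i)

lemma Dfac_pos (m : ℕ →₀ ℕ) : 0 < Dfac m :=
  prod_pos m _ fun _ e => by positivity

lemma Dpow_pos (m : ℕ →₀ ℕ) : 0 < Dpow m :=
  prod_pos m _ fun i e => by positivity

lemma D_pos (m : ℕ →₀ ℕ) : 0 < D m := by
  rw [D_eq]; exact mul_pos (Dfac_pos m) (Dpow_pos m)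

lemma prod_add_single (m : ℕ →₀ ℕ) (i : ℕ) (f : ℕ → ℕ → ℚ) (hf : ∀ j, f j 0 = 1) :
    f i (m i) * (m + Finsupp.single i 1).prod f = f i (m i + 1) * m.prod f := by
  classical
  set s : Finset ℕ := insert i m.support with hs
  have hisub : m.support ⊆ s := Finset.subset_insert _ _
  have hisub2 : (m + Finsupp.single i 1).support ⊆ s := by
    refine Finset.Subset.trans Finsupp.support_add ?_
    apply Finset.union_subset hisub
    refine Finset.Subset.trans Finsupp.support_single_subset ?_
    simp [hs]
  have hi : i ∈ s := Finset.mem_insert_self _ _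
  rw [Finsupp.prod_of_support_subset m hisub f (fun j _ => hf j),
    Finsupp.prod_of_support_subset _ hisub2 f (fun j _ => hf j),
    ← Finset.mul_prod_erase s _ hi, ← Finset.mul_prod_erase s (fun j => f j (m j)) hi]
  have happ : (m + Finsupp.single i 1 : ℕ →₀ ℕ) i = m i + 1 := by
    simp [Finsupp.add_apply]
  have happ2 : ∀ j ∈ s.erase i, (m + Finsupp.single i 1 : ℕ →₀ ℕ) j = m j := by
    intro j hj
    have hne : j ≠ i := Finset.ne_of_mem_erase hj
    simp [Finsupp.add_apply, Finsupp.single_apply, Ne.symm hne]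
  have hpr : ∏ x ∈ s.erase i, f x ((m + Finsupp.single i 1 : ℕ →₀ ℕ) x)
      = ∏ x ∈ s.erase i, f x (m x) :=
    Finset.prod_congr rfl fun j hj => by rw [happ2 j hj]
  rw [happ, hpr]
  ring

lemma Dfac_add_single (m : ℕ →₀ ℕ) (i : ℕ) :
    Dfac (m + Finsupp.single i 1) = ((m i : ℚ) + 1) * Dfac m := by
  have h : ((m i).factorial : ℚ) * Dfac (m + Finsupp.single i 1)
      = (((m i) + 1).factorial : ℚ) * Dfac m :=
    prod_add_single m i (fun _ e => (e.factorial : ℚ)) (fun _ => by simp)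
  have hne : ((m i).factorial : ℚ) ≠ 0 := Nat.cast_ne_zero.mpr (Nat.factorial_ne_zero _)
  have hsucc : (((m i) + 1).factorial : ℚ) = ((m i : ℚ) + 1) * ((m i).factorial : ℚ) := by
    rw [Nat.factorial_succ]; push_cast; ring
  rw [hsucc] at h
  exact mul_left_cancel₀ hne (by linarith [h])

lemma D_add_single (m : ℕ →₀ ℕ) (i : ℕ) :
    D (m + Finsupp.single i 1) = ((m i : ℚ) + 1) * (i.factorial : ℚ) * D m := by
  have h : ((m i).factorial : ℚ) * (i.factorial : ℚ) ^ (m i) * D (m + Finsupp.single i 1)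
      = (((m i) + 1).factorial : ℚ) * (i.factorial : ℚ) ^ (m i + 1) * D m :=
    prod_add_single m i (fun i e => (e.factorial : ℚ) * (i.factorial : ℚ) ^ e)
      (fun j => by simp)
  have hne : ((m i).factorial : ℚ) * (i.factorial : ℚ) ^ (m i) ≠ 0 := by positivity
  have hsucc : (((m i) + 1).factorial : ℚ) * (i.factorial : ℚ) ^ (m i + 1)
      = ((m i : ℚ) + 1) * (i.factorial : ℚ) * (((m i).factorial : ℚ) * (i.factorial : ℚ) ^ (m i)) := by
    rw [Nat.factorial_succ, pow_succ]; push_cast; ring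
  rw [hsucc] at h
  exact mul_left_cancel₀ hne (by linarith [h])



lemma sub_add_cancel {m : ℕ →₀ ℕ} {i : ℕ} (h : 1 ≤ m i) :
    (m - Finsupp.single i 1) + Finsupp.single i 1 = m :=
  tsub_add_cancel_of_le (Finsupp.single_le_iff.mpr h)

lemma S_sub {m : ℕ →₀ ℕ} {i : ℕ} (h : 1 ≤ m i) :
    S (m - Finsupp.single i 1) + 1 = S m := by
  conv_rhs => rw [← sub_add_cancel h]
  rw [S_add, S_single]

lemma sub_apply_self {m : ℕ →₀ ℕ} {i : ℕ} (h : 1 ≤ m i) :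
    (m - Finsupp.single i 1 : ℕ →₀ ℕ) i = m i - 1 := by
  simp [Finsupp.tsub_apply]

lemma Dfac_sub {m : ℕ →₀ ℕ} {i : ℕ} (h : 1 ≤ m i) :
    Dfac m = (m i : ℚ) * Dfac (m - Finsupp.single i 1) := by
  conv_lhs => rw [← sub_add_cancel h]
  rw [Dfac_add_single, sub_apply_self h]
  have : ((m i - 1 : ℕ) : ℚ) + 1 = (m i : ℚ) := by
    have := Nat.succ_pred_eq_of_pos h
    push_cast [Nat.cast_sub h]
    ring
  rw [this]

lemma card_Tset : ∀ (k : ℕ) (m : ℕ →₀ ℕ), S m = k →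
    ((Tset k m).card : ℚ) * Dfac m = (k.factorial : ℚ) := by
  intro k
  induction k with
  | zero =>
    intro m hm
    have hm0 : m = 0 := S_eq_zero hm
    subst hm0
    have : Tset 0 0 = {(Fin.elim0 : Fin 0 → ℕ)} := by
      ext b
      simp only [Tset, Finset.mem_filter, Fintype.mem_piFinset, Finset.mem_singleton]
      constructor
      · intro _; exact Subsingleton.elim _ _
      · intro h
        refine ⟨fun j => j.elim0, ?_⟩
        simp [mono]
    rw [this]
    simp [Dfac]
  | succ k ih =>
    intro m hm
    have hcard : (Tset (k+1) m).card = ∑ i ∈ m.support, (Tset k (m - Finsupp.single i 1)).card := by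
      rw [Finset.card_eq_sum_card_fiberwise (s := Tset (k+1) m) (t := m.support)
        (f := fun b => b 0)
        (fun b hb => mem_support_of_mono (Finset.mem_filter.mp hb).2 0)]
      refine Finset.sum_congr rfl fun i hi => ?_
      have hmi : 1 ≤ m i := Finsupp.mem_support_iff.mp hi |> Nat.one_le_iff_ne_zero.mpr
      refine Finset.card_bij' (fun b _ => Fin.tail b) (fun b' _ => Fin.cons i b') ?_ ?_ ?_ ?_
      · -- forward membership
        intro b hb
        simp only [Finset.mem_filter, Tset, Fintype.mem_piFinset] at hb ⊢
        obtain ⟨⟨_, hmono⟩, hb0⟩ := hb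
        have hdecomp : mono b = Finsupp.single i 1 + mono (Fin.tail b) := by
          rw [← hb0, ← mono_cons, Fin.cons_self_tail]
        have htail : mono (Fin.tail b) = m - Finsupp.single i 1 := by
          rw [hmono] at hdecomp
          exact eq_tsub_of_add_eq (by rw [add_comm]; exact hdecomp.symm)
        exact ⟨fun j => mem_support_of_mono htail j, htail⟩
      · -- backward membership
        intro b' hb'
        simp only [Finset.mem_filter, Tset, Fintype.mem_piFinset] at hb' ⊢
        obtain ⟨_, hmono⟩ := hb'
        have hm' : mono (Fin.cons i b') = m := by
          rw [mono_cons, hmono, add_comm, sub_add_cancel hmi]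
        refine ⟨⟨fun j => mem_support_of_mono hm' j, hm'⟩, ?_⟩
        simp
      · intro b hb
        simp only [Finset.mem_filter] at hb
        show Fin.cons i (Fin.tail b) = b
        rw [← hb.2]
        exact Fin.cons_self_tail b
      · intro b' _
        exact Fin.tail_cons _ _
    rw [hcard]
    push_cast
    rw [Finset.sum_mul]
    have hterm : ∀ i ∈ m.support,
        ((Tset k (m - Finsupp.single i 1)).card : ℚ) * Dfac m = (k.factorial : ℚ) * (m i : ℚ) := by
      intro i hi
      have hmi : 1 ≤ m i := Finsupp.mem_support_iff.mp hi |> Nat.one_le_iff_ne_zero.mpr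
      rw [Dfac_sub hmi]
      have hS : S (m - Finsupp.single i 1) = k := by
        have := S_sub hmi; omega
      rw [show ((Tset k (m - Finsupp.single i 1)).card : ℚ) * ((m i : ℚ) * Dfac (m - Finsupp.single i 1))
        = ((Tset k (m - Finsupp.single i 1)).card : ℚ) * Dfac (m - Finsupp.single i 1) * (m i : ℚ) by ring,
        ih _ hS]
    rw [Finset.sum_congr rfl hterm, ← Finset.mul_sum]
    have hsum : ∑ i ∈ m.support, (m i : ℚ) = ((k + 1 : ℕ) : ℚ) := by
      rw [← hm]
      unfold S Finsupp.sum
      push_cast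
      rfl
    rw [hsum, Nat.factorial_succ]
    push_cast
    ring


lemma W_sub {m : ℕ →₀ ℕ} {i : ℕ} (h : 1 ≤ m i) :
    W (m - Finsupp.single i 1) + i = W m := by
  conv_rhs => rw [← sub_add_cancel h]
  rw [W_add, W_single, Nat.mul_one]


lemma D_sub {m : ℕ →₀ ℕ} {i : ℕ} (h : 1 ≤ m i) :
    D m = (m i : ℚ) * (i.factorial : ℚ) * D (m - Finsupp.single i 1) := by
  conv_lhs => rw [← sub_add_cancel h]
  rw [D_add_single, sub_apply_self h]
  have : ((m i - 1 : ℕ) : ℚ) + 1 = (m i : ℚ) := by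
    push_cast [Nat.cast_sub h]; ring
  rw [this]

lemma prod_X {k : ℕ} (b : Fin k → ℕ) :
    (∏ j, (MvPolynomial.X (b j) : MvPolynomial ℕ ℚ)) = MvPolynomial.monomial (mono b) 1 := by
  induction k with
  | zero => simp [mono]
  | succ k ih =>
    rw [Fin.prod_univ_succ, ih (fun j => b j.succ)]
    have : (MvPolynomial.X (b 0) : MvPolynomial ℕ ℚ)
        = MvPolynomial.monomial (Finsupp.single (b 0) 1) 1 := rfl
    have h2 : mono b = Finsupp.single (b 0) 1 + mono (fun j => b j.succ) := by
      rw [mono, Fin.sum_univ_succ]; rfl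
    rw [this, MvPolynomial.monomial_mul, one_mul, h2]

lemma coeff_corr (m : ℕ →₀ ℕ) (k : ℕ) (hk : 1 ≤ k) (hSm : S m = k) :
    corr 2 ![0, 0] m = (k.factorial : ℚ)⁻¹ *
      ∑ b ∈ Finset.Nat.antidiagonalTuple k (k - 1),
        (((k - 1).factorial : ℚ) / ∏ j, ((b j).factorial : ℚ)) *
          (if mono b = m then 1 else 0) := by
  have hS : (m.sum fun _ e => e) = k := hSm
  rw [corr, hS, corrPoly]
  have ha : (∑ i, (![0, 0] : Fin 2 → ℕ) i) = 0 := by simp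
  rw [ha]
  rw [if_pos ⟨by omega, Nat.zero_le _⟩]
  have h23 : 2 + k - 3 = k - 1 := by omega
  rw [h23]
  have hfa : (∏ i, (((![0, 0] : Fin 2 → ℕ) i).factorial : ℚ)) = 1 := by simp
  rw [hfa, MvPolynomial.coeff_smul, MvPolynomial.coeff_sum, smul_eq_mul]
  simp only [Nat.sub_zero, one_mul]
  try congr 1
  refine Finset.sum_congr rfl fun b _ => ?_
  rw [MvPolynomial.coeff_C_mul, prod_X, MvPolynomial.coeff_monomial]

lemma mu_zero (m : ℕ →₀ ℕ) (h : ¬(1 ≤ S m ∧ W m = S m - 1)) :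
    corr 2 ![0, 0] m = 0 := by
  by_cases hk : 1 ≤ S m
  · have hw : W m ≠ S m - 1 := fun hc => h ⟨hk, hc⟩
    rw [coeff_corr m (S m) hk rfl]
    have : ∀ b ∈ Finset.Nat.antidiagonalTuple (S m) (S m - 1),
        (((S m - 1).factorial : ℚ) / ∏ j, ((b j).factorial : ℚ)) *
          (if mono b = m then 1 else 0) = 0 := by
      intro b hb
      rw [if_neg, mul_zero]
      intro hc
      have h1 : W m = ∑ j, b j := by
        rw [show W m = W (mono b) from by rw [hc], W_mono]
      exact hw (h1.trans (Finset.Nat.mem_antidiagonalTuple.mp hb))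
    rw [Finset.sum_congr rfl this, Finset.sum_const, smul_zero, mul_zero]
  · have hS : (m.sum fun _ e => e) = S m := rfl
    rw [corr, hS, corrPoly, if_neg, MvPolynomial.coeff_zero]
    push_neg
    intro h3
    omega

lemma mu_val (m : ℕ →₀ ℕ) (hk : 1 ≤ S m) (hw : W m = S m - 1) :
    corr 2 ![0, 0] m = ((S m - 1).factorial : ℚ) / D m := by
  set k := S m with hkdef
  rw [coeff_corr m k hk rfl]
  have hfil : (Finset.Nat.antidiagonalTuple k (k - 1)).filter (fun b => mono b = m)
      = Tset k m := by
    ext b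
    simp only [Finset.mem_filter, Finset.Nat.mem_antidiagonalTuple, Tset,
      Fintype.mem_piFinset]
    constructor
    · rintro ⟨hsum, hmono⟩
      exact ⟨fun j => mem_support_of_mono hmono j, hmono⟩
    · rintro ⟨hsupp, hmono⟩
      refine ⟨?_, hmono⟩
      rw [← W_mono b, hmono, hw]
  have hsum : ∑ b ∈ Finset.Nat.antidiagonalTuple k (k - 1),
      (((k - 1).factorial : ℚ) / ∏ j, ((b j).factorial : ℚ)) *
        (if mono b = m then 1 else 0)
      = ∑ b ∈ (Finset.Nat.antidiagonalTuple k (k - 1)).filter (fun b => mono b = m),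
        (((k - 1).factorial : ℚ) / ∏ j, ((b j).factorial : ℚ)) := by
    rw [Finset.sum_filter]
    refine Finset.sum_congr rfl fun b _ => ?_
    split_ifs <;> ring
  rw [hsum, hfil]
  have hconst : ∀ b ∈ Tset k m,
      (((k - 1).factorial : ℚ) / ∏ j, ((b j).factorial : ℚ))
        = ((k - 1).factorial : ℚ) / Dpow m := by
    intro b hb
    have hmono : mono b = m := (Finset.mem_filter.mp hb).2
    rw [prod_eq b (fun i => (i.factorial : ℚ)), hmono]
    rfl
  rw [Finset.sum_congr rfl hconst, Finset.sum_const, nsmul_eq_mul]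
  have hcard := card_Tset k m rfl
  have h1 : (Dfac m) ≠ 0 := ne_of_gt (Dfac_pos m)
  have h2 : (Dpow m) ≠ 0 := ne_of_gt (Dpow_pos m)
  have h3 : (k.factorial : ℚ) ≠ 0 := Nat.cast_ne_zero.mpr (Nat.factorial_ne_zero _)
  have hcd : ((Tset k m).card : ℚ) = (k.factorial : ℚ) / Dfac m :=
    (eq_div_iff h1).mpr hcard
  rw [hcd, D_eq]
  field_simp
  try ring


lemma coeff_X_mul_pd (i j : ℕ) (F : MvPowerSeries ℕ ℚ) (m : ℕ →₀ ℕ) (h : 1 ≤ m i) :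
    MvPowerSeries.coeff m (MvPowerSeries.X i * pd j F)
      = (((m - Finsupp.single i 1 : ℕ →₀ ℕ) j + 1 : ℕ) : ℚ) *
        F ((m - Finsupp.single i 1) + Finsupp.single j 1) := by
  rw [MvPowerSeries.X, MvPowerSeries.coeff_monomial_mul,
    if_pos (Finsupp.single_le_iff.mpr h), one_mul]
  rfl

lemma W_filter (m : ℕ →₀ ℕ) :
    ∑ i ∈ m.support.filter (fun i => 1 ≤ i), i * m i = W m := by
  rw [W, Finsupp.sum, Finset.sum_filter]
  refine Finset.sum_congr rfl fun i _ => ?_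
  by_cases h1 : 1 ≤ i
  · simp [h1]
  · have : i = 0 := by omega
    simp [this]


end Stmt14aux

open Stmt14aux in
theorem stmt14 :
    Lop (corr 2 ![0, 0]) = 1 ∧
    (∀ m : ℕ →₀ ℕ, m 0 = 0 → MvPowerSeries.coeff m (corr 2 ![0, 0]) = 0) := by
  constructor
  · funext m
    set k := S m with hk
    set w := W m with hw
    have hone : (1 : MvPowerSeries ℕ ℚ) m = if m = 0 then 1 else 0 :=
      MvPowerSeries.coeff_one m
    show pd 0 (corr 2 ![0, 0]) m -
      (∑ i ∈ m.support.filter (fun i => 1 ≤ i),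
        MvPowerSeries.coeff m (MvPowerSeries.X i * pd (i - 1) (corr 2 ![0, 0])))
      = (1 : MvPowerSeries ℕ ℚ) m
    rw [hone]
    have hS0 : S (m + Finsupp.single 0 1) = k + 1 := by rw [S_add, S_single]
    have hW0 : W (m + Finsupp.single 0 1) = w := by rw [W_add, W_single]; ring
    by_cases hwk : w = k
    · -- case W m = S m
      by_cases hm0 : m = 0
      · subst hm0
        rw [if_pos rfl]
        have hsupp : ((0 : ℕ →₀ ℕ)).support.filter (fun i => 1 ≤ i) = ∅ := by simp
        rw [hsupp, Finset.sum_empty, sub_zero, pd]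
        have hk0 : k = 0 := by rw [hk]; simp [S]
        have hw0 : w = 0 := by rw [hw]; simp [W]
        have hS0' : S ((0 : ℕ →₀ ℕ) + Finsupp.single 0 1) = 1 := by rw [hS0, hk0]
        have hW0' : W ((0 : ℕ →₀ ℕ) + Finsupp.single 0 1) = 0 := by rw [hW0, hw0]
        have hD1 : D ((0 : ℕ →₀ ℕ) + Finsupp.single 0 1) = 1 := by
          rw [D_add_single]
          simp [D]
        have h1 : corr 2 ![0, 0] ((0 : ℕ →₀ ℕ) + Finsupp.single 0 1) = 1 := by
          rw [mu_val _ (by rw [hS0']) (by rw [hW0', hS0']), hS0', hD1]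
          norm_num
        rw [h1]
        simp
      · -- m ≠ 0
        rw [if_neg hm0]
        have hk1 : 1 ≤ k := by
          by_contra hc
          exact hm0 (S_eq_zero (by omega))
        have hDm : D m ≠ 0 := ne_of_gt (D_pos m)
        -- pd 0 term
        have hpd : pd 0 (corr 2 ![0, 0]) m = (k.factorial : ℚ) / D m := by
          rw [pd, mu_val _ (by omega) (by rw [hW0, hS0]; omega), hS0]
          have hD0 : D (m + Finsupp.single 0 1) = ((m 0 : ℚ) + 1) * D m := by
            rw [D_add_single]; simp
          rw [hD0, show k + 1 - 1 = k from by omega]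
          have hne : ((m 0 : ℚ) + 1) ≠ 0 := by positivity
          field_simp
          push_cast
          ring
        rw [hpd]
        -- sum term
        have hterm : ∀ i ∈ m.support.filter (fun i => 1 ≤ i),
            MvPowerSeries.coeff m (MvPowerSeries.X i * pd (i - 1) (corr 2 ![0, 0]))
              = ((i * m i : ℕ) : ℚ) * (((k - 1).factorial : ℚ) / D m) := by
          intro i hi
          simp only [Finset.mem_filter, Finsupp.mem_support_iff] at hi
          have hmi : 1 ≤ m i := Nat.one_le_iff_ne_zero.mpr hi.1
          have hi1 : 1 ≤ i := hi.2
          rw [coeff_X_mul_pd i (i - 1) _ m hmi]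
          set m' := m - Finsupp.single i 1 with hm'
          have hSm' : S m' + 1 = k := S_sub hmi
          have hWm' : W m' + i = w := W_sub hmi
          set m'' := m' + Finsupp.single (i - 1) 1 with hm''
          have hS'' : S m'' = k := by rw [hm'', S_add, S_single]; omega
          have hW'' : W m'' = k - 1 := by
            rw [hm'', W_add, W_single, Nat.mul_one]
            omega
          have hval : corr 2 ![0, 0] m'' = ((k - 1).factorial : ℚ) / D m'' :=
            (mu_val m'' (by omega) (by rw [hW'', hS''])).trans (by rw [hS''])
          rw [hval]
          have hD'' : D m'' = ((m' (i - 1) : ℚ) + 1) * ((i - 1).factorial : ℚ) * D m' := by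
            rw [hm'', D_add_single]
          have hDm2 : D m = (m i : ℚ) * (i.factorial : ℚ) * D m' := D_sub hmi
          have hD'ne : D m' ≠ 0 := ne_of_gt (D_pos m')
          have hfacne : ((i - 1).factorial : ℚ) ≠ 0 := Nat.cast_ne_zero.mpr (Nat.factorial_ne_zero _)
          have hm'ne : ((m' (i - 1) : ℚ) + 1) ≠ 0 := by positivity
          have hifacn : i.factorial = i * (i - 1).factorial := by
            conv_lhs => rw [show i = (i - 1) + 1 from by omega]
            rw [Nat.factorial_succ, show i - 1 + 1 = i from by omega]
          have hifac : (i.factorial : ℚ) = (i : ℚ) * ((i - 1).factorial : ℚ) := by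
            rw [hifacn]; push_cast; ring
          rw [hD'', hDm2, hifac]
          push_cast
          field_simp
        rw [Finset.sum_congr rfl hterm, ← Finset.sum_mul]
        have hsum : ∑ i ∈ m.support.filter (fun i => 1 ≤ i), ((i * m i : ℕ) : ℚ) = (w : ℚ) := by
          rw [← Nat.cast_sum, W_filter]
        rw [hsum, hwk]
        have hkfacn : k.factorial = k * (k - 1).factorial := by
          conv_lhs => rw [show k = (k - 1) + 1 from by omega]
          rw [Nat.factorial_succ, show k - 1 + 1 = k from by omega]
        have hkfac : (k.factorial : ℚ) = (k : ℚ) * ((k - 1).factorial : ℚ) := by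
          rw [hkfacn]; push_cast; ring
        rw [hkfac]
        field_simp
        ring
    · -- case W m ≠ S m : everything vanishes
      have hm0 : m ≠ 0 := by
        intro hc
        apply hwk
        subst hc
        rw [hk, hw]
        simp [S, W]
      rw [if_neg hm0]
      have hk1 : 1 ≤ k := by
        by_contra hc
        exact hm0 (S_eq_zero (by omega))
      have hpd : pd 0 (corr 2 ![0, 0]) m = 0 := by
        rw [pd, mu_zero _ (by rw [hS0, hW0]; omega), mul_zero]
      have hterm : ∀ i ∈ m.support.filter (fun i => 1 ≤ i),
          MvPowerSeries.coeff m (MvPowerSeries.X i * pd (i - 1) (corr 2 ![0, 0])) = 0 := by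
        intro i hi
        simp only [Finset.mem_filter, Finsupp.mem_support_iff] at hi
        have hmi : 1 ≤ m i := Nat.one_le_iff_ne_zero.mpr hi.1
        have hi1 : 1 ≤ i := hi.2
        rw [coeff_X_mul_pd i (i - 1) _ m hmi]
        set m' := m - Finsupp.single i 1 with hm'
        have hSm' : S m' + 1 = k := S_sub hmi
        have hWm' : W m' + i = w := W_sub hmi
        rw [mu_zero _ (by rw [S_add, W_add, S_single, W_single, Nat.mul_one]; omega), mul_zero]
      rw [hpd, Finset.sum_congr rfl hterm, Finset.sum_const, smul_zero]
      ring
  · intro m hm0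
    by_cases h : 1 ≤ S m ∧ W m = S m - 1
    · exfalso
      have hge : S m ≤ W m := by
        rw [S, W, Finsupp.sum, Finsupp.sum]
        refine Finset.sum_le_sum fun i hi => ?_
        have : i ≠ 0 := by
          intro hc
          rw [hc] at hi
          exact (Finsupp.mem_support_iff.mp hi) hm0
        have h1 : 1 ≤ i := by omega
        calc m i = 1 * m i := (one_mul _).symm
        _ ≤ i * m i := Nat.mul_le_mul_right _ h1
      omega
    · exact mu_zero m h


end
end

section
/- String equation for genus 0 correlators (Lemma 3.1, genus 0 case): Let t_0,t_1,… be formal variables. For n ≥ 3 and a_1,…,a_n ≥ 0 define ⟨⟨ψ^{a_1},…,ψ^{a_n}⟩⟩_{0,n} = Σ_{k≥0} (1/k!) Σ_{b_1,…,b_k ≥ 0, a_1+⋯+a_n+b_1+⋯+b_k = n+k−3} [(n+k−3)!/(a_1!⋯a_n! b_1!⋯b_k!)] t_{b_1}⋯t_{b_k} ∈ ℚ[[t_0,t_1,…]]. Then (i) 𝕃⟨⟨1,…,1⟩⟩_{0,n} = 0, where ⟨⟨1,…,1⟩⟩_{0,n} = ⟨⟨ψ^0,…,ψ^0⟩⟩_{0,n}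 and 𝕃 = ∂/∂t_0 − Σ_{i≥1} t_i ∂/∂t_{i−1}; and (ii) for the generating series G = Σ_{a_1,…,a_n ≥ 0} ⟨⟨ψ^{a_1},…,ψ^{a_n}⟩⟩_{0,n} u_1^{a_1+1}⋯u_n^{a_n+1} ∈ ℚ[[t_0,t_1,…]][[u_1,…,u_n]] one has 𝕃G = (u_1 + ⋯ + u_n)·G. -/
/-!
STATEMENT 15: String equation for genus 0 correlators (Lemma 3.1, genus 0):
(i) 𝕃⟨⟨1,…,1⟩⟩_{0,n} = 0 for n ≥ 3, and
(ii) for G = Σ_{a_1,…,a_n} ⟨⟨ψ^{a_1},…,ψ^{a_n}⟩⟩_{0,n} u_1^{a_1+1}⋯u_n^{a_n+1}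
one has 𝕃G = (u_1+⋯+u_n)·G, where 𝕃 acts on the u-coefficients.
-/

noncomputable section

/-- The generating series
`G = Σ_{a_1,…,a_n ≥ 0} ⟨⟨ψ^{a_1},…,ψ^{a_n}⟩⟩_{0,n} u_1^{a_1+1}⋯u_n^{a_n+1}`
in `ℚ[[t_0,t_1,…]][[u_1,…,u_n]]`. -/
def Gser (n : ℕ) : MvPowerSeries (Fin n) (MvPowerSeries ℕ ℚ) :=
  fun c => if ∀ i, 1 ≤ c i then corr n (fun i => c i - 1) else 0

/-!
Write `k` and `w = ∑ v m_v` for the degree and the weight of a monomial `t^m`. The coefficient of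
`t^m` in `⟨⟨ψ^{a_1},…,ψ^{a_n}⟩⟩_{0,n}` is `(|a| + w)! / ∏ a_i! · e(m)` if `|a| + w + 3 = n + k` and
`0` otherwise, where `e(m)` is the coefficient of `t^m` in `exp (∑ v, t_v / v!)`. Inserting a value
into a tuple shows `(m_v + 1) e(m + t_v) = e(m) / v!`, and with it every term of the string equation
at `t^m` becomes a multiple of one number `E`: `∂/∂t_0` contributes `(|a| + w) E`, each
`t_i ∂/∂t_{i-1}` contributes `i m_i E`, and lowering `a_ℓ` contributes `a_ℓ E`. These balance since
`∑ i m_i = w`. Statement (ii) is the same identity read coefficientwise in the `u_i`.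
-/

open Finset
open scoped Nat

def tupleMultiplicity {k : ℕ} (b : Fin k → ℕ) : ℕ →₀ ℕ := ∑ j, Finsupp.single (b j) 1

lemma degree_tupleMultiplicity {k : ℕ} (b : Fin k → ℕ) : (tupleMultiplicity b).degree = k := by
  simp [tupleMultiplicity, map_sum]

lemma weight_tupleMultiplicity {k : ℕ} (b : Fin k → ℕ) :
    Finsupp.weight id (tupleMultiplicity b) = ∑ j, b j := by
  simp [tupleMultiplicity, map_sum, Finsupp.weight_single]

lemma tupleMultiplicity_apply {k : ℕ} (b : Fin k → ℕ) (v : ℕ) :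
    tupleMultiplicity b v = #{j | b j = v} := by
  simp [tupleMultiplicity, Finsupp.finsetSum_apply, Finsupp.single_apply, Finset.sum_boole]

lemma tupleMultiplicity_eq_single_add_removeNth {k : ℕ} (b : Fin (k + 1) → ℕ) (j : Fin (k + 1)) :
    tupleMultiplicity b = Finsupp.single (b j) 1 + tupleMultiplicity (j.removeNth b) :=
  Fin.sum_univ_succAbove _ j

lemma prod_X_eq_monomial_tupleMultiplicity {k : ℕ} (b : Fin k → ℕ) :
    ∏ j, (MvPolynomial.X (b j) : MvPolynomial ℕ ℚ) =
      MvPolynomial.monomial (tupleMultiplicity b) 1 := by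
  rw [tupleMultiplicity, MvPolynomial.monomial_sum_one]
  rfl

def tuplesWith (k : ℕ) (m : ℕ →₀ ℕ) : Finset (Fin k → ℕ) :=
  {b ∈ Nat.antidiagonalTuple k (Finsupp.weight id m) | tupleMultiplicity b = m}

lemma mem_tuplesWith {k : ℕ} {m : ℕ →₀ ℕ} {b : Fin k → ℕ} :
    b ∈ tuplesWith k m ↔ tupleMultiplicity b = m := by
  rw [tuplesWith, mem_filter, Nat.mem_antidiagonalTuple, and_iff_right_iff_imp]
  rintro rfl
  exact (weight_tupleMultiplicity b).symm

/-- Inserting the value `v` at any of the `k + 1` positions of a tuple of multiplicity `μ` reaches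
every tuple of multiplicity `μ + single v 1` exactly `μ v + 1` times. -/
lemma sum_tuplesWith_add_single (μ : ℕ →₀ ℕ) (v k : ℕ) (f : (Fin (k + 1) → ℕ) → ℚ) :
    ∑ b ∈ tuplesWith (k + 1) (μ + Finsupp.single v 1), ((μ v : ℚ) + 1) * f b =
      ∑ j : Fin (k + 1), ∑ b ∈ tuplesWith k μ, f (j.insertNth v b) := by
  have hcount : ∀ b ∈ tuplesWith (k + 1) (μ + Finsupp.single v 1),
      ((μ v : ℚ) + 1) * f b = ∑ _j ∈ {j | b j = v}, f b := by
    intro b hb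
    rw [sum_const, nsmul_eq_mul, ← tupleMultiplicity_apply, mem_tuplesWith.mp hb]
    simp
  rw [sum_congr rfl hcount, sum_sigma', sum_sigma']
  refine sum_bij' (fun p _ => ⟨p.2, p.2.removeNth p.1⟩) (fun q _ => ⟨q.1.insertNth v q.2, q.1⟩)
    ?_ ?_ ?_ ?_ ?_
  · rintro ⟨b, j⟩ hp
    simp only [mem_sigma, mem_filter, mem_univ, true_and, mem_tuplesWith] at hp ⊢
    rw [tupleMultiplicity_eq_single_add_removeNth b j, hp.2, add_comm] at hp
    exact add_right_cancel hp.1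
  · rintro ⟨j, b⟩ hq
    simp only [mem_sigma, mem_filter, mem_univ, true_and, mem_tuplesWith] at hq ⊢
    rw [tupleMultiplicity_eq_single_add_removeNth _ j]
    simp [hq, add_comm]
  · rintro ⟨b, j⟩ hp
    simp only [mem_sigma, mem_filter, mem_univ, true_and] at hp
    simp [← hp.2]
  · rintro ⟨j, b⟩ -
    simp
  · rintro ⟨b, j⟩ hp
    simp only [mem_sigma, mem_filter, mem_univ, true_and] at hp
    simp [← hp.2]

/-- The coefficient of `t^m` in `exp (∑ v, t_v / v!)`. -/
def expCoeff (m : ℕ →₀ ℕ) : ℚ :=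
  (m.degree ! : ℚ)⁻¹ * ∑ b ∈ tuplesWith m.degree m, (∏ j, ((b j)! : ℚ))⁻¹

lemma succ_mul_expCoeff_add_single (μ : ℕ →₀ ℕ) (v : ℕ) :
    ((μ v : ℚ) + 1) * expCoeff (μ + Finsupp.single v 1) = expCoeff μ / v ! := by
  have hinsert : ∀ (j : Fin (μ.degree + 1)) (b : Fin μ.degree → ℕ),
      (∏ i, (((j.insertNth v b : Fin (μ.degree + 1) → ℕ) i)! : ℚ))⁻¹ =
        (v ! : ℚ)⁻¹ * (∏ i, ((b i)! : ℚ))⁻¹ := by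
    intro j b
    rw [Fin.prod_univ_succAbove _ j, mul_inv]
    simp
  rw [expCoeff, expCoeff, map_add, Finsupp.degree_single, mul_left_comm, mul_sum,
    sum_tuplesWith_add_single]
  simp only [hinsert, ← mul_sum, sum_const, card_fin, nsmul_eq_mul,
    Nat.factorial_succ]
  push_cast
  field_simp

lemma corr_apply (n : ℕ) (a : Fin n → ℕ) (m : ℕ →₀ ℕ) :
    corr n a m = if ∑ i, a i + Finsupp.weight id m + 3 = n + m.degree then
      ((∑ i, a i + Finsupp.weight id m)! / ∏ i, ((a i)! : ℚ)) * expCoeff m else 0 := by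
  set A := ∑ i, a i
  set k := m.degree with hk
  rw [corr, corrPoly, show (m.sum fun _ e => e) = k from rfl]
  by_cases hA : 3 ≤ n + k ∧ A ≤ n + k - 3
  swap
  · rw [if_neg hA, if_neg (by omega), MvPolynomial.coeff_zero]
  rw [if_pos hA]
  simp only [prod_X_eq_monomial_tupleMultiplicity, MvPolynomial.coeff_smul,
    MvPolynomial.coeff_sum, MvPolynomial.coeff_C_mul, MvPolynomial.coeff_monomial, mul_ite,
    mul_one, mul_zero, ← sum_filter, smul_eq_mul]
  by_cases hc : A + Finsupp.weight id m + 3 = n + k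
  · rw [if_pos hc, show n + k - 3 - A = Finsupp.weight id m by omega, ← tuplesWith, expCoeff,
      ← hk, show n + k - 3 = A + Finsupp.weight id m by omega, mul_sum, mul_sum, mul_sum]
    refine sum_congr rfl fun b _ => ?_
    field_simp
  · rw [if_neg hc, sum_eq_zero, mul_zero]
    intro b hb
    rw [mem_filter, Nat.mem_antidiagonalTuple, ← weight_tupleMultiplicity] at hb
    rw [hb.2] at hb
    omega

theorem MvPowerSeries.coeff_X_mul {σ R : Type*} [Semiring R] (F : MvPowerSeries σ R) (i : σ)
    (c : σ →₀ ℕ) :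
    coeff c (X i * F) = if Finsupp.single i 1 ≤ c then coeff (c - Finsupp.single i 1) F else 0 := by
  rw [X_def, coeff_monomial_mul, one_mul]

lemma Lop_apply (F : MvPowerSeries ℕ ℚ) (m : ℕ →₀ ℕ) :
    Lop F m = ((m 0 : ℚ) + 1) * F (m + Finsupp.single 0 1) -
      ∑ i ∈ m.support.filter (1 ≤ ·), (((m - Finsupp.single i 1 : ℕ →₀ ℕ) (i - 1) : ℚ) + 1) *
        F (m - Finsupp.single i 1 + Finsupp.single (i - 1) 1) := by
  rw [Lop, pd, Nat.cast_succ]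
  congr 1
  refine sum_congr rfl fun i hi => ?_
  rw [mem_filter, Finsupp.mem_support_iff] at hi
  rw [MvPowerSeries.coeff_X_mul,
    if_pos (Finsupp.single_le_iff.mpr (Nat.one_le_iff_ne_zero.mpr hi.1)),
    MvPowerSeries.coeff_apply, pd, Nat.cast_succ]

lemma sum_filter_support_mul_eq_weight (m : ℕ →₀ ℕ) :
    ∑ i ∈ m.support.filter (1 ≤ ·), i * m i = Finsupp.weight id m := by
  rw [Finsupp.weight_apply, Finsupp.sum]
  refine (sum_filter_of_ne fun i _ h => ?_).trans (sum_congr rfl fun i _ => mul_comm _ _)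
  contrapose! h
  simp [Nat.lt_one_iff.mp h]

/-- The factor common to all terms of the string equation for `corr n a` at `t^m`. -/
def stringCoeff (n : ℕ) (a : Fin n → ℕ) (m : ℕ →₀ ℕ) : ℚ :=
  if ∑ i, a i + Finsupp.weight id m + 2 = n + m.degree then
    ((∑ i, a i + Finsupp.weight id m - 1)! / ∏ i, ((a i)! : ℚ)) * expCoeff m
  else 0

lemma succ_mul_corr_add_single_zero {n : ℕ} (hn : 3 ≤ n) (a : Fin n → ℕ) (m : ℕ →₀ ℕ) :
    ((m 0 : ℚ) + 1) * corr n a (m + Finsupp.single 0 1) =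
      ((∑ i, a i + Finsupp.weight id m : ℕ) : ℚ) * stringCoeff n a m := by
  rw [corr_apply, stringCoeff]
  simp only [map_add, Finsupp.degree_single, Finsupp.weight_single, id, smul_zero, add_zero]
  by_cases h : ∑ i, a i + Finsupp.weight id m + 2 = n + m.degree
  · obtain ⟨s, hs⟩ : ∃ s, ∑ i, a i + Finsupp.weight id m = s + 1 :=
      ⟨_, (Nat.succ_pred (by omega)).symm⟩
    rw [if_pos (by omega), if_pos h, mul_left_comm, succ_mul_expCoeff_add_single, hs,
      Nat.factorial_succ, add_tsub_cancel_right]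
    push_cast
    ring
  · rw [if_neg (by omega), if_neg h, mul_zero, mul_zero]

lemma succ_mul_corr_add_single (n : ℕ) (a : Fin n → ℕ) (μ : ℕ →₀ ℕ) (j : ℕ) :
    ((μ j : ℚ) + 1) * corr n a (μ + Finsupp.single j 1) =
      ((j + 1) * ((μ (j + 1) : ℚ) + 1)) * stringCoeff n a (μ + Finsupp.single (j + 1) 1) := by
  have hj := succ_mul_expCoeff_add_single μ j
  have hsucc :
      ((j : ℚ) + 1) * (((μ (j + 1) : ℚ) + 1) * expCoeff (μ + Finsupp.single (j + 1) 1)) =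
      expCoeff μ / j ! := by
    rw [succ_mul_expCoeff_add_single, Nat.factorial_succ]
    push_cast
    field_simp
  rw [corr_apply, stringCoeff]
  simp only [map_add, Finsupp.degree_single, Finsupp.weight_single, id, smul_eq_mul, one_mul]
  by_cases h : ∑ i, a i + Finsupp.weight id μ + j + 3 = n + (μ.degree + 1)
  · rw [if_pos (by omega), if_pos (by omega), show ∑ i, a i + (Finsupp.weight id μ + (j + 1)) - 1 =
      ∑ i, a i + (Finsupp.weight id μ + j) by omega]
    linear_combination ((∑ i, a i + (Finsupp.weight id μ + j))! / ∏ i, ((a i)! : ℚ)) * (hj - hsucc)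
  · rw [if_neg (by omega), if_neg (by omega), mul_zero, mul_zero]

lemma ite_corr_update_pred (n : ℕ) (a : Fin n → ℕ) (ℓ : Fin n) (m : ℕ →₀ ℕ) :
    (if 1 ≤ a ℓ then corr n (Function.update a ℓ (a ℓ - 1)) m else 0) =
      (a ℓ : ℚ) * stringCoeff n a m := by
  by_cases hpos : 1 ≤ a ℓ
  swap
  · simp [show a ℓ = 0 by omega]
  have hsum : ∑ i, Function.update a ℓ (a ℓ - 1) i + 1 = ∑ i, a i := by
    rw [← add_sum_erase univ _ (mem_univ ℓ), ← add_sum_erase univ a (mem_univ ℓ),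
      Function.update_self, sum_congr rfl fun i hi => Function.update_of_ne (ne_of_mem_erase hi) ..]
    omega
  have hprod : (a ℓ : ℚ) * ∏ i, ((Function.update a ℓ (a ℓ - 1) i)! : ℚ) = ∏ i, ((a i)! : ℚ) := by
    rw [← mul_prod_erase univ _ (mem_univ ℓ),
      ← mul_prod_erase univ (fun i => ((a i)! : ℚ)) (mem_univ ℓ),
      Function.update_self, ← mul_assoc, ← Nat.mul_factorial_pred (by omega : a ℓ ≠ 0),
      prod_congr rfl fun i hi => by rw [Function.update_of_ne (ne_of_mem_erase hi)]]
    push_cast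
    rfl
  rw [if_pos hpos, corr_apply, stringCoeff, ← hsum, ← hprod]
  by_cases h : ∑ i, Function.update a ℓ (a ℓ - 1) i + Finsupp.weight id m + 3 = n + m.degree
  · rw [if_pos h, if_pos (by omega), show ∑ i, Function.update a ℓ (a ℓ - 1) i + 1 +
      Finsupp.weight id m - 1 = ∑ i, Function.update a ℓ (a ℓ - 1) i + Finsupp.weight id m by omega]
    field_simp
  · rw [if_neg h, if_neg (by omega), mul_zero]

theorem Lop_corr {n : ℕ} (hn : 3 ≤ n) (a : Fin n → ℕ) :
    Lop (corr n a) = ∑ ℓ, if 1 ≤ a ℓ then corr n (Function.update a ℓ (a ℓ - 1)) else 0 := by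
  funext m
  have hlower : ∀ i ∈ m.support.filter (1 ≤ ·),
      (((m - Finsupp.single i 1 : ℕ →₀ ℕ) (i - 1) : ℚ) + 1) *
        corr n a (m - Finsupp.single i 1 + Finsupp.single (i - 1) 1) =
      ((i * m i : ℕ) : ℚ) * stringCoeff n a m := by
    intro i hi
    rw [mem_filter, Finsupp.mem_support_iff] at hi
    obtain ⟨j, rfl⟩ : ∃ j, i = j + 1 := ⟨i - 1, by omega⟩
    have hm : m - Finsupp.single (j + 1) 1 + Finsupp.single (j + 1) 1 = m :=
      tsub_add_cancel_of_le (Finsupp.single_le_iff.mpr (Nat.one_le_iff_ne_zero.mpr hi.1))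
    rw [add_tsub_cancel_right, succ_mul_corr_add_single, hm, Finsupp.tsub_apply,
      Finsupp.single_eq_same, Nat.cast_sub (Nat.one_le_iff_ne_zero.mpr hi.1)]
    push_cast
    ring
  rw [Lop_apply, succ_mul_corr_add_single_zero hn, sum_congr rfl hlower, ← sum_mul]
  simp only [← MvPowerSeries.coeff_apply, map_sum, apply_ite (MvPowerSeries.coeff m), map_zero]
  simp only [MvPowerSeries.coeff_apply, ite_corr_update_pred]
  rw [← sum_mul, ← Nat.cast_sum, sum_filter_support_mul_eq_weight]
  push_cast
  ring

lemma Lop_zero : Lop 0 = 0 := by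
  funext m
  rw [Lop_apply]
  simp [← MvPowerSeries.coeff_apply]

lemma Lop_Gser {n : ℕ} (hn : 3 ≤ n) (c : Fin n →₀ ℕ) :
    Lop (Gser n c) =
      ∑ ℓ, if Finsupp.single ℓ 1 ≤ c then Gser n (c - Finsupp.single ℓ 1) else 0 := by
  by_cases hc : ∀ i, 1 ≤ c i
  · rw [Gser, if_pos hc, Lop_corr hn]
    refine sum_congr rfl fun ℓ _ => ?_
    have hsub : ⇑(c - Finsupp.single ℓ 1 : Fin n →₀ ℕ) = Function.update c ℓ (c ℓ - 1) := by
      funext i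
      rcases eq_or_ne i ℓ with rfl | hi <;> simp [*]
    have hpos : (∀ i, 1 ≤ Function.update c ℓ (c ℓ - 1) i) ↔ 1 ≤ c ℓ - 1 := by
      refine ⟨fun h => by simpa using h ℓ, fun h i => ?_⟩
      rcases eq_or_ne i ℓ with rfl | hi <;> simp [*]
    have hshift : (fun i => Function.update c ℓ (c ℓ - 1) i - 1) =
        Function.update (fun i => c i - 1) ℓ (c ℓ - 1 - 1) := by
      funext i
      rcases eq_or_ne i ℓ with rfl | hi <;> simp [*]
    rw [if_pos (Finsupp.single_le_iff.mpr (hc ℓ)), Gser]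
    simp only [hsub, hpos, hshift]
  · obtain ⟨j, hj⟩ := not_forall.mp hc
    rw [Gser, if_neg hc, Lop_zero]
    refine (sum_eq_zero fun ℓ _ => ?_).symm
    have hvanish : ¬ ∀ i, 1 ≤ (c - Finsupp.single ℓ 1 : Fin n →₀ ℕ) i :=
      fun h => hj ((h j).trans (by simp))
    rw [Gser, if_neg hvanish, ite_self]

theorem stmt15 (n : ℕ) (hn : 3 ≤ n) :
    Lop (corr n fun _ => 0) = 0 ∧
    (fun c => Lop (Gser n c)) =
      (∑ i : Fin n, MvPowerSeries.X i) * Gser n := by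
  refine ⟨by simpa using Lop_corr hn fun _ => 0, ?_⟩
  funext c
  change Lop (Gser n c) = MvPowerSeries.coeff c ((∑ i, MvPowerSeries.X i) * Gser n)
  rw [Lop_Gser hn, sum_mul, map_sum]
  simp only [MvPowerSeries.coeff_X_mul]
  rfl

end
end
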